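/- arXiv:1401.1169 — 2 statements merged into one kernel-verified Lean document; each statement's English description precedes it below -/
import Mathlib

section
/- For real β, γ, δ > 0, ω ∈ ℝ, and s > |ω|^{1/β}, the Laplace transform of t ↦ t^{γ−1} E^δ_{β,γ}(ω t^β) equals s^{−γ} (1 − ω s^{−β})^{−δ}, i.e., ∫_0^∞ e^{−st} t^{γ−1} E^δ_{β,γ}(ω t^β) dt = s^{−γ}(1 − ω s^{−β})^{−δ}. -/
/-!
Expand the Mittag-Leffler function termwise. The Laplace transform of `t ^ (β j + γ - 1)`
is `Γ(β j + γ) s ^ (-(β j + γ))`, so the Gamma factors cancel and what remains is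
`s ^ (-γ)` times the binomial series `∑ (δ)_j / j! x ^ j = (1 - x) ^ (-δ)` at
`x = ω s ^ (-β)`, where `|x| < 1` exactly when `s > |ω| ^ (1 / β)`. The same computation
with absolute values gives the binomial series at `|x|`, which converges absolutely and so
justifies exchanging sum and integral.
-/

open MeasureTheory Real Set

theorem prod_range_add_div_factorial_eq_choose (δ : ℝ) (n : ℕ) :
    (∏ i ∈ Finset.range n, (δ + i)) / n.factorial = Ring.choose (δ + n - 1) n := by
  have hpoch : (ascPochhammer ℝ n).eval δ = ∏ i ∈ Finset.range n, (δ + i) := by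
    induction n with
    | zero => simp
    | succ n ih => simp [ascPochhammer_succ_right, ih, Finset.prod_range_succ]
  have h := Ring.factorial_nsmul_multichoose_eq_ascPochhammer δ n
  rw [Polynomial.ascPochhammer_smeval_eq_eval, hpoch, nsmul_eq_mul, Ring.multichoose_eq] at h
  rw [← h]
  field_simp

theorem hasSum_prod_add_div_factorial_mul_pow (δ : ℝ) {x : ℝ} (hx : |x| < 1) :
    HasSum (fun n => (∏ i ∈ Finset.range n, (δ + i)) / n.factorial * x ^ n)
      ((1 - x) ^ (-δ)) := by
  have hball : x ∈ Metric.eball (0 : ℝ) 1 := by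
    simpa [enorm_eq_nnnorm, ← NNReal.coe_lt_coe] using hx
  have h := (Real.one_div_one_sub_rpow_hasFPowerSeriesOnBall_zero δ).hasSum hball
  simp only [FormalMultilinearSeries.ofScalars_apply_eq, smul_eq_mul, zero_add] at h
  rw [rpow_neg (by linarith [le_abs_self x]), ← one_div]
  simpa only [prod_range_add_div_factorial_eq_choose] using h

theorem summable_abs_prod_add_div_factorial_mul_pow (δ : ℝ) {x : ℝ} (hx : |x| < 1) :
    Summable (fun n => |(∏ i ∈ Finset.range n, (δ + i)) / n.factorial| * |x| ^ n) := by
  have hball : x ∈ Metric.eball (0 : ℝ) 1 := by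
    simpa [enorm_eq_nnnorm, ← NNReal.coe_lt_coe] using hx
  have h := FormalMultilinearSeries.summable_norm_apply _
    (Metric.eball_subset_eball (Real.one_div_one_sub_rpow_hasFPowerSeriesOnBall_zero δ).r_le hball)
  simpa only [FormalMultilinearSeries.ofScalars_apply_eq, smul_eq_mul, norm_mul, norm_pow,
    Real.norm_eq_abs, prod_range_add_div_factorial_eq_choose] using h

theorem integrableOn_rpow_sub_one_mul_exp_neg_mul {q s : ℝ} (hq : 0 < q) (hs : 0 < s) :
    IntegrableOn (fun t : ℝ => t ^ (q - 1) * exp (-(s * t))) (Ioi 0) := by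
  simpa using integrableOn_rpow_mul_exp_neg_mul_rpow (s := q - 1) (p := 1) (b := s)
    (by linarith) one_pos hs

theorem integral_Ioi_tsum_mul_rpow_sub_one_mul_exp_neg_mul {a q : ℕ → ℝ} {s : ℝ}
    (hq : ∀ j, 0 < q j) (hs : 0 < s)
    (ha : Summable fun j => |a j| * ((1 / s) ^ q j * Gamma (q j))) :
    ∫ t in Ioi (0 : ℝ), ∑' j, a j * (t ^ (q j - 1) * exp (-(s * t)))
      = ∑' j, a j * ((1 / s) ^ q j * Gamma (q j)) := by
  have hnorm : ∀ j, ∫ t in Ioi (0 : ℝ), ‖a j * (t ^ (q j - 1) * exp (-(s * t)))‖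
      = |a j| * ((1 / s) ^ q j * Gamma (q j)) := fun j => by
    rw [← integral_rpow_mul_exp_neg_mul_Ioi (hq j) hs, ← integral_const_mul]
    refine setIntegral_congr_fun measurableSet_Ioi fun t (ht : 0 < t) => ?_
    have hpos : 0 < t ^ (q j - 1) * exp (-(s * t)) := by positivity
    rw [norm_mul, Real.norm_eq_abs, Real.norm_eq_abs, abs_of_pos hpos]
  rw [← integral_tsum_of_summable_integral_norm
    (fun j => ((integrableOn_rpow_sub_one_mul_exp_neg_mul (hq j) hs).const_mul (a j)))
    (by simpa only [hnorm] using ha)]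
  simp only [integral_const_mul, integral_rpow_mul_exp_neg_mul_Ioi (hq _) hs]

theorem integral_Ioi_exp_mul_rpow_mul_tsum_div_Gamma {c : ℕ → ℝ} {β γ s : ℝ}
    (hβ : 0 ≤ β) (hγ : 0 < γ) (hs : 0 < s) (hc : Summable fun j => |c j| * (s ^ (-β)) ^ j) :
    ∫ t in Ioi (0 : ℝ), exp (-s * t) * t ^ (γ - 1) *
        ∑' j : ℕ, c j * (t ^ β) ^ j / Gamma (β * j + γ)
      = s ^ (-γ) * ∑' j, c j * (s ^ (-β)) ^ j := by
  have hq : ∀ j : ℕ, 0 < β * j + γ := fun j => by positivity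
  have hscale : ∀ (j : ℕ) (b : ℝ),
      b / Gamma (β * j + γ) * ((1 / s) ^ (β * j + γ) * Gamma (β * j + γ))
        = s ^ (-γ) * (b * (s ^ (-β)) ^ j) := fun j b => by
    have hΓ := (Gamma_pos_of_pos (hq j)).ne'
    rw [one_div, inv_rpow hs.le, ← rpow_neg hs.le, neg_add, rpow_add hs,
      ← rpow_mul_natCast hs.le, neg_mul]
    field_simp
  have hterm : ∀ t ∈ Ioi (0 : ℝ), exp (-s * t) * t ^ (γ - 1) *
      ∑' j : ℕ, c j * (t ^ β) ^ j / Gamma (β * j + γ)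
      = ∑' j : ℕ, c j / Gamma (β * j + γ) * (t ^ (β * j + γ - 1) * exp (-(s * t))) := by
    intro t (ht : 0 < t)
    rw [← tsum_mul_left]
    refine tsum_congr fun j => ?_
    rw [← rpow_mul_natCast ht.le, add_sub_assoc, rpow_add ht, neg_mul]
    ring
  have hsum : Summable fun j : ℕ =>
      |c j / Gamma (β * j + γ)| * ((1 / s) ^ (β * j + γ) * Gamma (β * j + γ)) := by
    simp only [abs_div, abs_of_pos (Gamma_pos_of_pos (hq _)), hscale]
    exact hc.mul_left _
  rw [setIntegral_congr_fun measurableSet_Ioi hterm,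
    integral_Ioi_tsum_mul_rpow_sub_one_mul_exp_neg_mul hq hs hsum, ← tsum_mul_left]
  exact tsum_congr fun j => hscale j (c j)

theorem laplace_generalized_mittagLeffler_general (β γ δ ω : ℝ)
    (hβ : 0 < β) (hγ : 0 < γ) (s : ℝ)
    (hs : |ω| ^ (1 / β) < s) :
    ∫ t in Ioi (0 : ℝ), Real.exp (-s * t) * t ^ (γ - 1) *
        (∑' j : ℕ, (∏ i ∈ Finset.range j, (δ + i)) * (ω * t ^ β) ^ j /
          ((j.factorial : ℝ) * Real.Gamma (β * j + γ)))
      = s ^ (-γ) * (1 - ω * s ^ (-β)) ^ (-δ) := by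
  have hs0 : 0 < s := (rpow_nonneg (abs_nonneg ω) _).trans_lt hs
  have hx : |ω * s ^ (-β)| < 1 := by
    rw [abs_mul, abs_of_pos (rpow_pos_of_pos hs0 _), rpow_neg hs0.le, ← div_eq_mul_inv,
      div_lt_one (rpow_pos_of_pos hs0 _)]
    simpa [← rpow_mul (abs_nonneg ω), hβ.ne'] using
      rpow_lt_rpow (rpow_nonneg (abs_nonneg ω) _) hs hβ
  set c : ℕ → ℝ := fun j => (∏ i ∈ Finset.range j, (δ + i)) / j.factorial * ω ^ j
  have hseries : ∀ t : ℝ,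
      ∑' j : ℕ, (∏ i ∈ Finset.range j, (δ + i)) * (ω * t ^ β) ^ j /
        ((j.factorial : ℝ) * Gamma (β * j + γ))
        = ∑' j : ℕ, c j * (t ^ β) ^ j / Gamma (β * j + γ) :=
    fun t => tsum_congr fun j => by rw [mul_pow]; ring
  have hc : ∀ j, c j * (s ^ (-β)) ^ j
      = (∏ i ∈ Finset.range j, (δ + i)) / j.factorial * (ω * s ^ (-β)) ^ j := fun j => by
    rw [mul_pow]; ring
  simp only [hseries]
  rw [integral_Ioi_exp_mul_rpow_mul_tsum_div_Gamma hβ.le hγ hs0, tsum_congr hc,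
    (hasSum_prod_add_div_factorial_mul_pow δ hx).tsum_eq]
  simpa only [c, abs_mul, abs_pow, mul_pow, abs_of_pos (rpow_pos_of_pos hs0 _), mul_assoc] using
    summable_abs_prod_add_div_factorial_mul_pow δ hx

/-- Laplace transform of `t ↦ t^{γ-1} E^δ_{β,γ}(ω t^β)`:
for real `β, γ, δ > 0`, `ω ∈ ℝ` and `s > |ω|^{1/β}`,
`∫_0^∞ e^{-st} t^{γ-1} E^δ_{β,γ}(ω t^β) dt = s^{-γ} (1 - ω s^{-β})^{-δ}`. -/
theorem laplace_generalized_mittagLeffler (β γ δ ω : ℝ)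
    (hβ : 0 < β) (hγ : 0 < γ) (hδ : 0 < δ) (s : ℝ)
    (hs : |ω| ^ (1 / β) < s) :
    ∫ t in Ioi (0 : ℝ), Real.exp (-s * t) * t ^ (γ - 1) *
        (∑' j : ℕ, (∏ i ∈ Finset.range j, (δ + i)) * (ω * t ^ β) ^ j /
          ((j.factorial : ℝ) * Real.Gamma (β * j + γ)))
      = s ^ (-γ) * (1 - ω * s ^ (-β)) ^ (-δ) :=
  laplace_generalized_mittagLeffler_general β γ δ ω hβ hγ s hs
end

section
/- For 0 < β₁ < β₂ < 1 and c₁, c₂ > 0, the function t ↦ (1/c₂) t^{β₂} E_{β₂−β₁, β₂+1}(−(c₁/c₂) t^{β₂−β₁}) has Laplace transform λ ↦ 1/(c₁ λ^{β₁+1} + c₂ λ^{β₂+1}) for λ > 0. -/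
/-!
Write `F(t) = t^b E_{α,b+1}(-c t^α)` with `α = β₂ - β₁`, `b = β₂`, `c = c₁ / c₂`; the integrand
is `e^{-λt} F(t) / c₂`. Integrating the series termwise against the kernel `(t - s)^{α-1}` is a
Beta integral that shifts the summation index, which gives the Volterra equation
`F(t) = t^b / Γ(b+1) - (c / Γ(α)) ∫₀ᵗ F(s) (t - s)^{α-1} ds`.
Since `α ≤ 1` the kernel is nonincreasing. If `F ≥ 0` on `[0, T]` and `F` had a negative minimum
at `t₁ ∈ [T, T + ε]`, comparing the equation at `t₁` and at the last point `a < t₁` with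
`F(a) ≥ 0` would give `F(t₁) ≥ θ F(t₁)` with `θ = c (a - T)^α / Γ(α+1) < 1` for small `ε`; so
nonnegativity propagates in steps of `ε`, and `0 ≤ F(t) ≤ t^b / Γ(b+1)`. Hence the Laplace
integral converges for every `λ > 0` (termwise Laplace transformation would need `λ^α > c`),
and by the convolution theorem the Volterra equation becomes the linear equation
`L = λ^{-b-1} - c λ^{-α} L` for its value `L`.
-/

open MeasureTheory Real Set Filter Topology

theorem Gamma_mul_sub_one_rpow_le_Gamma_add {x a : ℝ} (hx : 1 < x) (ha : 0 < a) :
    Gamma x * (x - 1) ^ a ≤ Gamma (x + a) := by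
  have hx1 : 0 < x - 1 := by linarith
  have hΓx : 0 < Gamma x := Gamma_pos_of_pos (by linarith)
  have hlog_rec : log (Gamma x) = log (x - 1) + log (Gamma (x - 1)) := by
    rw [← log_mul hx1.ne' (Gamma_pos_of_pos hx1).ne', ← Gamma_add_one hx1.ne', sub_add_cancel]
  have hslope := convexOn_log_Gamma.slope_mono_adjacent (mem_Ioi.mpr hx1)
    (mem_Ioi.mpr (by linarith : 0 < x + a)) (by linarith : x - 1 < x) (by linarith : x < x + a)
  simp only [Function.comp_apply, sub_sub_cancel, div_one, add_sub_cancel_left, hlog_rec,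
    add_sub_cancel_right, le_div_iff₀ ha] at hslope
  rw [← log_le_log_iff (by positivity) (Gamma_pos_of_pos (by linarith)),
    log_mul hΓx.ne' (by positivity), log_rpow hx1]
  linarith

theorem summable_pow_div_Gamma {α : ℝ} (hα : 0 < α) (β C : ℝ) :
    Summable fun j : ℕ => C ^ j / Gamma (α * j + β) := by
  have harg : Tendsto (fun j : ℕ => α * j + β) atTop atTop :=
    tendsto_atTop_add_const_right _ β (tendsto_natCast_atTop_atTop.const_mul_atTop hα)
  have hpow : Tendsto (fun j : ℕ => (α * j + β - 1) ^ α) atTop atTop :=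
    (tendsto_rpow_atTop hα).comp (tendsto_atTop_add_const_right _ (-1) harg)
  refine summable_of_ratio_norm_eventually_le (r := 1 / 2) (by norm_num) ?_
  filter_upwards [harg.eventually_ge_atTop 2, hpow.eventually_ge_atTop (2 * |C|)] with j hj hjC
  have hΓ : 0 < Gamma (α * j + β) := Gamma_pos_of_pos (by linarith)
  have hΓ' : 0 < Gamma (α * j + β + α) := Gamma_pos_of_pos (by linarith)
  have hgrowth : 2 * |C| * Gamma (α * j + β) ≤ Gamma (α * j + β + α) :=
    calc 2 * |C| * Gamma (α * j + β) ≤ Gamma (α * j + β) * (α * j + β - 1) ^ α := by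
          rw [mul_comm]; gcongr
      _ ≤ _ := Gamma_mul_sub_one_rpow_le_Gamma_add (by linarith) hα
  rw [show α * ((j + 1 : ℕ) : ℝ) + β = α * j + β + α by push_cast; ring, norm_div, norm_div,
    norm_pow, norm_pow, norm_of_nonneg hΓ.le, norm_of_nonneg hΓ'.le, Real.norm_eq_abs,
    div_le_iff₀ hΓ', pow_succ]
  have := mul_le_mul_of_nonneg_left hgrowth (pow_nonneg (abs_nonneg C) j)
  field_simp
  linarith

theorem integral_rpow_mul_sub_rpow {u v t : ℝ} (hu : 0 < u) (hv : 0 < v) (ht : 0 < t) :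
    ∫ s in 0..t, s ^ (u - 1) * (t - s) ^ (v - 1) =
      Gamma u * Gamma v / Gamma (u + v) * t ^ (u + v - 1) := by
  have hΓ : (Gamma (u + v) : ℂ) ≠ 0 :=
    Complex.ofReal_ne_zero.mpr (Gamma_pos_of_pos (by linarith)).ne'
  have hbeta := Complex.Gamma_mul_Gamma_eq_betaIntegral (s := u) (t := v) (by simpa) (by simpa)
  rw [← Complex.ofReal_add, Complex.Gamma_ofReal, Complex.Gamma_ofReal,
    Complex.Gamma_ofReal] at hbeta
  apply Complex.ofReal_injective
  rw [← intervalIntegral.integral_ofReal, intervalIntegral.integral_congr (g := fun s : ℝ =>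
    (s : ℂ) ^ ((u : ℂ) - 1) * ((t : ℂ) - s) ^ ((v : ℂ) - 1)) ?_]
  · rw [Complex.betaIntegral_scaled _ _ ht, eq_div_of_mul_eq hΓ (hbeta.trans (mul_comm _ _)).symm]
    push_cast [Complex.ofReal_cpow ht.le]
    field_simp
  · intro s hs
    rw [uIcc_of_le ht.le] at hs
    simp only [Complex.ofReal_mul, Complex.ofReal_cpow hs.1,
      Complex.ofReal_cpow (sub_nonneg.mpr hs.2)]
    push_cast
    rfl

theorem intervalIntegrable_sub_rpow {r : ℝ} (hr : -1 < r) (x a b : ℝ) :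
    IntervalIntegrable (fun s => (x - s) ^ r) volume a b := by
  simpa using
    (intervalIntegral.intervalIntegrable_rpow' hr (a := x - a) (b := x - b)).comp_sub_left x

theorem integral_sub_rpow {α x y : ℝ} (hα : 0 < α) :
    ∫ s in y..x, (x - s) ^ (α - 1) = (x - y) ^ α / α := by
  rw [intervalIntegral.integral_comp_sub_left (fun s => s ^ (α - 1)), sub_self,
    integral_rpow (Or.inl (by linarith)), sub_add_cancel, zero_rpow hα.ne', sub_zero]

theorem integral_exp_neg_mul_mul_rpow {lam q : ℝ} (hlam : 0 < lam) (hq : -1 < q) :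
    ∫ t in Ioi 0, exp (-lam * t) * t ^ q = (1 / lam) ^ (q + 1) * Gamma (q + 1) := by
  rw [← integral_rpow_mul_exp_neg_mul_Ioi (by linarith) hlam, add_sub_cancel_right]
  simp only [neg_mul, mul_comm (exp _)]

theorem integrableOn_exp_neg_mul_mul_rpow {lam q : ℝ} (hlam : 0 < lam) (hq : -1 < q) :
    IntegrableOn (fun t => exp (-lam * t) * t ^ q) (Ioi 0) := by
  simpa [mul_comm] using integrableOn_rpow_mul_exp_neg_mul_rpow hq zero_lt_one hlam

theorem exists_last_nonneg {F : ℝ → ℝ} {T t : ℝ} (hTt : T ≤ t) (hF : ContinuousOn F (Icc T t))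
    (hT : 0 ≤ F T) : ∃ a ∈ Icc T t, 0 ≤ F a ∧ ∀ s ∈ Ioc a t, F s < 0 := by
  set S := Icc T t ∩ F ⁻¹' Ici 0
  have hS : BddAbove S := ⟨t, fun s hs => hs.1.2⟩
  have ha : sSup S ∈ S := (hF.preimage_isClosed_of_isClosed isClosed_Icc isClosed_Ici).csSup_mem
    ⟨T, ⟨le_rfl, hTt⟩, hT⟩ hS
  refine ⟨sSup S, ha.1, ha.2, fun s hs => ?_⟩
  by_contra! hFs
  exact (le_csSup hS ⟨⟨ha.1.1.trans hs.1.le, hs.2⟩, hFs⟩).not_gt hs.1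

section Volterra

variable {F g : ℝ → ℝ} {α q : ℝ}

theorem volterra_integral_le (hα : 0 < α) (hα1 : α ≤ 1) {T a t m : ℝ} (hT : 0 ≤ T)
    (hTa : T ≤ a) (hat : a ≤ t) (hF : ContinuousOn F (Icc 0 t))
    (hF_nonneg : ∀ s ∈ Icc 0 T, 0 ≤ F s) (hm : ∀ s ∈ Icc T a, m ≤ F s) (hm0 : m ≤ 0)
    (hF_nonpos : ∀ s ∈ Ioc a t, F s ≤ 0) :
    ∫ s in 0..t, F s * (t - s) ^ (α - 1) ≤
      (∫ s in 0..a, F s * (a - s) ^ (α - 1)) - m * ((a - T) ^ α / α) := by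
  have hint : ∀ x u v, 0 ≤ u → u ≤ v → v ≤ t →
      IntervalIntegrable (fun s => F s * (x - s) ^ (α - 1)) volume u v := fun x u v hu huv hv =>
    (intervalIntegrable_sub_rpow (by linarith) x u v).continuousOn_mul
      (hF.mono (by rw [uIcc_of_le huv]; exact Icc_subset_Icc hu hv))
  have hker : ∀ s, s < a → (t - s) ^ (α - 1) ≤ (a - s) ^ (α - 1) := fun s hs =>
    rpow_le_rpow_of_nonpos (by linarith) (by linarith) (by linarith)
  have hhead : ∫ s in 0..T, F s * (t - s) ^ (α - 1) ≤ ∫ s in 0..T, F s * (a - s) ^ (α - 1) :=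
    intervalIntegral.integral_mono_on_of_le_Ioo hT (hint t 0 T le_rfl hT (hTa.trans hat))
      (hint a 0 T le_rfl hT (hTa.trans hat)) fun s hs => mul_le_mul_of_nonneg_left
        (hker s (hs.2.trans_le hTa)) (hF_nonneg s (Ioo_subset_Icc_self hs))
  have hmid : ∫ s in T..a, F s * (t - s) ^ (α - 1) ≤
      ∫ s in T..a, (F s * (a - s) ^ (α - 1) - m * (a - s) ^ (α - 1)) := by
    refine intervalIntegral.integral_mono_on_of_le_Ioo hTa (hint t T a hT hTa hat)
      ((hint a T a hT hTa hat).sub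
        ((intervalIntegrable_sub_rpow (by linarith) a T a).const_mul m)) fun s hs => ?_
    have hkt : 0 ≤ (t - s) ^ (α - 1) := rpow_nonneg (by linarith [hs.2]) _
    have hFs := hm s (Ioo_subset_Icc_self hs)
    nlinarith [hker s hs.2]
  have htail : ∫ s in a..t, F s * (t - s) ^ (α - 1) ≤ 0 := by
    rw [← intervalIntegral.integral_zero]
    refine intervalIntegral.integral_mono_on_of_le_Ioo hat (hint t a t (hT.trans hTa) hat le_rfl)
      intervalIntegrable_const fun s hs =>
        mul_nonpos_of_nonpos_of_nonneg (hF_nonpos s (Ioo_subset_Ioc_self hs))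
          (rpow_nonneg (by linarith [hs.2]) _)
  have hsplit_t := intervalIntegral.integral_add_adjacent_intervals
    (hint t 0 a le_rfl (hT.trans hTa) hat) (hint t a t (hT.trans hTa) hat le_rfl)
  have hsplit_t_head := intervalIntegral.integral_add_adjacent_intervals
    (hint t 0 T le_rfl hT (hTa.trans hat)) (hint t T a hT hTa hat)
  have hsplit_a := intervalIntegral.integral_add_adjacent_intervals
    (hint a 0 T le_rfl hT (hTa.trans hat)) (hint a T a hT hTa hat)
  rw [intervalIntegral.integral_sub (hint a T a hT hTa hat)
    ((intervalIntegrable_sub_rpow (by linarith) a T a).const_mul m),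
    intervalIntegral.integral_const_mul, integral_sub_rpow hα] at hmid
  linarith

theorem volterra_nonneg_extend (hα : 0 < α) (hα1 : α ≤ 1) (hq : 0 ≤ q)
    (hF : ContinuousOn F (Ici 0)) (hg : MonotoneOn g (Ici 0))
    (hvol : ∀ t, 0 ≤ t → F t = g t - q * ∫ s in 0..t, F s * (t - s) ^ (α - 1))
    {T ε : ℝ} (hT : 0 ≤ T) (hε : q * ε ^ α < α) (hF_nonneg : ∀ s ∈ Icc 0 T, 0 ≤ F s) :
    ∀ s ∈ Icc 0 (T + ε), 0 ≤ F s := by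
  by_contra! ⟨t₀, ht₀, hFt₀⟩
  have hTt₀ : T < t₀ := lt_of_not_ge fun h => hFt₀.not_ge (hF_nonneg t₀ ⟨ht₀.1, h⟩)
  have hIcc : ∀ {u v : ℝ}, 0 ≤ u → Icc u v ⊆ Ici 0 := fun hu s hs => hu.trans hs.1
  obtain ⟨t₁, ht₁, hmin⟩ := isCompact_Icc.exists_isMinOn
    (nonempty_Icc.2 (by linarith [ht₀.2])) (hF.mono (hIcc hT) : ContinuousOn F (Icc T (T + ε)))
  have hm : F t₁ < 0 := (hmin ⟨hTt₀.le, ht₀.2⟩).trans_lt hFt₀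
  obtain ⟨a, ha, hFa, hF_nonpos⟩ := exists_last_nonneg ht₁.1 (hF.mono (hIcc hT))
    (hF_nonneg T ⟨hT, le_rfl⟩)
  have hI := volterra_integral_le hα hα1 hT ha.1 ha.2 (hF.mono (hIcc le_rfl)) hF_nonneg
    (fun s hs => hmin ⟨hs.1, hs.2.trans (ha.2.trans ht₁.2)⟩) hm.le
    fun s hs => (hF_nonpos s hs).le
  have hpow : (a - T) ^ α ≤ ε ^ α :=
    rpow_le_rpow (sub_nonneg.2 ha.1) (by linarith [ha.2, ht₁.2]) hα.le
  have hga : g a ≤ g t₁ := hg (hT.trans ha.1) (hT.trans ht₁.1) ha.2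
  have hθ : q * ((a - T) ^ α / α) < 1 := by
    rw [← mul_div_assoc, div_lt_one hα]
    exact (mul_le_mul_of_nonneg_left hpow hq).trans_lt hε
  have key : F a + q * ((a - T) ^ α / α) * F t₁ ≤ F t₁ := by
    have := mul_le_mul_of_nonneg_left hI hq
    linarith [hvol t₁ (hT.trans ht₁.1), hvol a (hT.trans ha.1)]
  nlinarith

theorem volterra_nonneg (hα : 0 < α) (hα1 : α ≤ 1) (hq : 0 ≤ q)
    (hF : ContinuousOn F (Ici 0)) (hg : MonotoneOn g (Ici 0)) (hg0 : 0 ≤ g 0)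
    (hvol : ∀ t, 0 ≤ t → F t = g t - q * ∫ s in 0..t, F s * (t - s) ^ (α - 1))
    {t : ℝ} (ht : 0 ≤ t) : 0 ≤ F t := by
  have hsmall : Tendsto (fun ε => q * ε ^ α) (𝓝[>] 0) (𝓝 0) := by
    simpa [zero_rpow hα.ne'] using
      (((continuous_rpow_const hα.le).tendsto 0).const_mul q).mono_left nhdsWithin_le_nhds
  obtain ⟨ε, hε, hεpos⟩ :=
    ((hsmall.eventually (gt_mem_nhds hα)).and self_mem_nhdsWithin).exists
  have hstep : ∀ n : ℕ, ∀ s ∈ Icc 0 (n * ε), 0 ≤ F s := by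
    intro n
    induction n with
    | zero =>
      intro s hs
      obtain rfl : s = 0 := by simpa using hs
      simpa [hvol 0 le_rfl] using hg0
    | succ n ih =>
      rw [Nat.cast_succ, add_one_mul]
      exact volterra_nonneg_extend hα hα1 hq hF hg hvol (by positivity) hε ih
  obtain ⟨n, hn⟩ := exists_nat_ge (t / ε)
  exact hstep n t ⟨ht, (div_le_iff₀ hεpos).mp hn⟩

end Volterra

namespace MittagLeffler

noncomputable def mlTerm (α b c : ℝ) (j : ℕ) (t : ℝ) : ℝ :=
  (-c) ^ j * t ^ (α * j + b) / Gamma (α * j + (b + 1))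

-- `mlSum α b c t = t ^ b * E_{α, b+1}(-c t ^ α)` for `t > 0`.
noncomputable def mlSum (α b c t : ℝ) : ℝ := ∑' j : ℕ, mlTerm α b c j t

variable {α b c : ℝ}

theorem norm_mlTerm_le (hα : 0 ≤ α) (hb : 0 ≤ b) {T t : ℝ} (hT : 0 < T) (ht : t ∈ Icc 0 T)
    (j : ℕ) : ‖mlTerm α b c j t‖ ≤ T ^ b * ((|c| * T ^ α) ^ j / Gamma (α * j + (b + 1))) := by
  have hΓ : 0 < Gamma (α * j + (b + 1)) := Gamma_pos_of_pos (by positivity)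
  have hpow : t ^ (α * j + b) ≤ T ^ b * (T ^ α) ^ j := by
    rw [← rpow_natCast, ← rpow_mul hT.le, ← rpow_add hT, add_comm b]
    exact rpow_le_rpow ht.1 ht.2 (by positivity)
  rw [mlTerm, norm_div, norm_mul, norm_pow, norm_neg, norm_of_nonneg hΓ.le,
    norm_of_nonneg (rpow_nonneg ht.1 _), Real.norm_eq_abs, mul_pow, ← mul_div_assoc]
  refine div_le_div_of_nonneg_right ?_ hΓ.le
  calc |c| ^ j * t ^ (α * j + b) ≤ |c| ^ j * (T ^ b * (T ^ α) ^ j) := by gcongr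
    _ = _ := by ring

theorem summable_mlTerm_bound (hα : 0 < α) (b c T : ℝ) :
    Summable fun j : ℕ => T ^ b * ((|c| * T ^ α) ^ j / Gamma (α * j + (b + 1))) :=
  (summable_pow_div_Gamma hα _ _).mul_left _

theorem summable_mlTerm (hα : 0 < α) (hb : 0 ≤ b) {t : ℝ} (ht : 0 ≤ t) :
    Summable fun j => mlTerm α b c j t :=
  .of_norm_bounded (summable_mlTerm_bound hα b c (t + 1))
    (norm_mlTerm_le hα.le hb (by linarith) ⟨ht, by linarith⟩)

theorem continuous_mlTerm (hα : 0 ≤ α) (hb : 0 ≤ b) (j : ℕ) : Continuous (mlTerm α b c j) :=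
  (continuous_const.mul (continuous_rpow_const (by positivity))).div_const _

theorem mlSum_zero (hα : 0 ≤ α) (hb : 0 < b) : mlSum α b c 0 = 0 := by
  have hterm : ∀ j : ℕ, mlTerm α b c j 0 = 0 := fun j => by
    rw [mlTerm, zero_rpow (by positivity), mul_zero, zero_div]
  simp [mlSum, hterm]

theorem continuousOn_mlSum (hα : 0 < α) (hb : 0 ≤ b) : ContinuousOn (mlSum α b c) (Ici 0) := by
  refine continuousOn_of_locally_continuousOn fun x hx => ⟨Iio (x + 1), isOpen_Iio,
    lt_add_one x, ContinuousOn.mono (s := Icc 0 (x + 1)) ?_ fun t ht => ⟨ht.1, ht.2.le⟩⟩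
  exact continuousOn_tsum (fun j => (continuous_mlTerm hα.le hb j).continuousOn)
    (summable_mlTerm_bound hα b c (x + 1))
    fun j t ht => norm_mlTerm_le hα.le hb (by linarith [mem_Ici.mp hx]) ht j

theorem mlTerm_zero (t : ℝ) : mlTerm α b c 0 t = t ^ b / Gamma (b + 1) := by
  simp [mlTerm]

theorem rpow_mul_tsum_eq_mlSum {t : ℝ} (ht : 0 < t) :
    t ^ b * ∑' j : ℕ, (-c * t ^ α) ^ j / Gamma (α * j + (b + 1)) = mlSum α b c t := by
  rw [mlSum, ← tsum_mul_left]
  congr 1 with j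
  rw [mlTerm, mul_pow, ← rpow_mul_natCast ht.le, rpow_add ht]
  ring

theorem integral_mlTerm_mul_sub_rpow (hα : 0 < α) (hb : 0 ≤ b) (hc : c ≠ 0) {t : ℝ}
    (ht : 0 < t) (j : ℕ) :
    ∫ s in 0..t, mlTerm α b c j s * (t - s) ^ (α - 1) =
      -(Gamma α / c) * mlTerm α b c (j + 1) t := by
  have hu : 0 < α * j + (b + 1) := by positivity
  have hΓ : Gamma (α * j + (b + 1)) ≠ 0 := (Gamma_pos_of_pos hu).ne'
  have hbeta := integral_rpow_mul_sub_rpow hu hα ht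
  rw [show α * j + (b + 1) - 1 = α * j + b by ring,
    show α * j + (b + 1) + α - 1 = α * (j + 1 : ℕ) + b by push_cast; ring,
    show α * j + (b + 1) + α = α * (j + 1 : ℕ) + (b + 1) by push_cast; ring] at hbeta
  calc ∫ s in 0..t, mlTerm α b c j s * (t - s) ^ (α - 1)
      = (-c) ^ j / Gamma (α * j + (b + 1)) *
          ∫ s in 0..t, s ^ (α * j + b) * (t - s) ^ (α - 1) := by
        rw [← intervalIntegral.integral_const_mul]
        congr 1 with s
        rw [mlTerm]
        ring
    _ = -(Gamma α / c) * mlTerm α b c (j + 1) t := by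
        rw [hbeta, mlTerm, pow_succ]
        field_simp

theorem integral_mlSum_mul_sub_rpow (hα : 0 < α) (hb : 0 ≤ b) (hc : c ≠ 0) {t : ℝ}
    (ht : 0 < t) :
    ∫ s in 0..t, mlSum α b c s * (t - s) ^ (α - 1) =
      Gamma α / c * (t ^ b / Gamma (b + 1) - mlSum α b c t) := by
  set B : ℕ → ℝ := fun j => t ^ b * ((|c| * t ^ α) ^ j / Gamma (α * j + (b + 1)))
  have hB : Summable B := summable_mlTerm_bound hα b c t
  have hkernel : ∀ s ∈ uIoc 0 t, 0 ≤ (t - s) ^ (α - 1) := fun s hs =>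
    rpow_nonneg (sub_nonneg.mpr (uIoc_of_le ht.le ▸ hs).2) _
  have hsum_integral : HasSum (fun j => ∫ s in 0..t, mlTerm α b c j s * (t - s) ^ (α - 1))
      (∫ s in 0..t, mlSum α b c s * (t - s) ^ (α - 1)) := by
    refine intervalIntegral.hasSum_integral_of_dominated_convergence
      (fun j s => B j * (t - s) ^ (α - 1))
      (fun j => ((continuous_mlTerm hα.le hb j).measurable.mul
        (by fun_prop)).aestronglyMeasurable) (fun j => .of_forall fun s hs => ?_)
      (.of_forall fun s _ => hB.mul_right _) ?_
      (.of_forall fun s hs => (summable_mlTerm hα hb ?_).hasSum.mul_right _)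
    · rw [norm_mul, norm_of_nonneg (hkernel s hs)]
      refine mul_le_mul_of_nonneg_right (norm_mlTerm_le hα.le hb ht ?_ j) (hkernel s hs)
      rw [uIoc_of_le ht.le] at hs
      exact Ioc_subset_Icc_self hs
    · simp_rw [tsum_mul_right]
      exact (intervalIntegrable_sub_rpow (by linarith) t 0 t).const_mul _
    · rw [uIoc_of_le ht.le] at hs
      exact hs.1.le
  have hsum_shift : HasSum (fun j => -(Gamma α / c) * mlTerm α b c (j + 1) t)
      (-(Gamma α / c) * (mlSum α b c t - t ^ b / Gamma (b + 1))) := by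
    refine HasSum.mul_left _ ?_
    rw [← mlTerm_zero]
    simpa [mlSum] using
      (hasSum_nat_add_iff' 1).mpr (summable_mlTerm hα hb (c := c) ht.le).hasSum
  simp_rw [integral_mlTerm_mul_sub_rpow hα hb hc ht] at hsum_integral
  rw [hsum_integral.unique hsum_shift]
  ring

theorem mlSum_eq_sub_integral (hα : 0 < α) (hb : 0 < b) (hc : c ≠ 0) {t : ℝ} (ht : 0 ≤ t) :
    mlSum α b c t =
      t ^ b / Gamma (b + 1) - c / Gamma α * ∫ s in 0..t, mlSum α b c s * (t - s) ^ (α - 1) := by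
  rcases ht.eq_or_lt with rfl | ht
  · simp [mlSum_zero hα.le hb, zero_rpow hb.ne']
  · rw [integral_mlSum_mul_sub_rpow hα hb.le hc ht]
    field_simp [(Gamma_pos_of_pos hα).ne']
    ring

theorem mlSum_nonneg (hα : 0 < α) (hα1 : α ≤ 1) (hb : 0 < b) (hc : 0 < c) {t : ℝ}
    (ht : 0 ≤ t) : 0 ≤ mlSum α b c t :=
  volterra_nonneg hα hα1 (div_nonneg hc.le (Gamma_pos_of_pos hα).le)
    (continuousOn_mlSum hα hb.le)
    (fun _ hx _ _ hxy => div_le_div_of_nonneg_right (rpow_le_rpow hx hxy hb.le)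
      (Gamma_pos_of_pos (by linarith)).le)
    (by positivity) (fun _ => mlSum_eq_sub_integral hα hb hc.ne') ht

theorem mlSum_le (hα : 0 < α) (hα1 : α ≤ 1) (hb : 0 < b) (hc : 0 < c) {t : ℝ} (ht : 0 ≤ t) :
    mlSum α b c t ≤ t ^ b / Gamma (b + 1) := by
  rw [mlSum_eq_sub_integral hα hb hc.ne' ht, sub_le_self_iff]
  exact mul_nonneg (div_nonneg hc.le (Gamma_pos_of_pos hα).le) <|
    intervalIntegral.integral_nonneg ht fun s hs =>
      mul_nonneg (mlSum_nonneg hα hα1 hb hc hs.1) (rpow_nonneg (sub_nonneg.2 hs.2) _)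

theorem integrableOn_exp_neg_mul_mlSum (hα : 0 < α) (hα1 : α ≤ 1) (hb : 0 < b) (hc : 0 < c)
    {lam : ℝ} (hlam : 0 < lam) :
    IntegrableOn (fun t => exp (-lam * t) * mlSum α b c t) (Ioi 0) := by
  refine ((integrableOn_exp_neg_mul_mul_rpow hlam (by linarith : -1 < b)).div_const
    (Gamma (b + 1))).mono' ?_ ((ae_restrict_iff' measurableSet_Ioi).2 (.of_forall fun t ht => ?_))
  · exact ((by fun_prop : Continuous fun t => exp (-lam * t)).continuousOn.mul
      ((continuousOn_mlSum hα hb.le).mono Ioi_subset_Ici_self)).aestronglyMeasurable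
      measurableSet_Ioi
  · rw [norm_mul, norm_of_nonneg (exp_pos _).le,
      norm_of_nonneg (mlSum_nonneg hα hα1 hb hc (le_of_lt ht)), mul_div_assoc]
    exact mul_le_mul_of_nonneg_left (mlSum_le hα hα1 hb hc (le_of_lt ht)) (exp_pos _).le

theorem integral_exp_neg_mul_mlSum (hα : 0 < α) (hα1 : α ≤ 1) (hb : 0 < b) (hc : 0 < c)
    {lam : ℝ} (hlam : 0 < lam) :
    ∫ t in Ioi 0, exp (-lam * t) * mlSum α b c t =
      (1 / lam) ^ (b + 1) / (1 + c * (1 / lam) ^ α) := by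
  have hΓα : 0 < Gamma α := Gamma_pos_of_pos hα
  have hΓb : 0 < Gamma (b + 1) := Gamma_pos_of_pos (by linarith)
  have hF := integrableOn_exp_neg_mul_mlSum hα hα1 hb hc hlam
  have hconv := integral_posConvolution hF
    (integrableOn_exp_neg_mul_mul_rpow hlam (by linarith : -1 < α - 1))
    (ContinuousLinearMap.mul ℝ ℝ)
  simp only [ContinuousLinearMap.mul_apply'] at hconv
  have hinner : ∀ x ∈ Ioi (0 : ℝ), ∫ t in 0..x,
      exp (-lam * t) * mlSum α b c t * (exp (-lam * (x - t)) * (x - t) ^ (α - 1)) =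
        Gamma α / c *
          (exp (-lam * x) * x ^ b / Gamma (b + 1) - exp (-lam * x) * mlSum α b c x) := by
    intro x hx
    have hexp : ∀ t, exp (-lam * t) * exp (-lam * (x - t)) = exp (-lam * x) := fun t => by
      rw [← exp_add]; ring_nf
    calc _ = exp (-lam * x) * ∫ t in 0..x, mlSum α b c t * (x - t) ^ (α - 1) := by
          rw [← intervalIntegral.integral_const_mul]
          congr 1 with t
          rw [← hexp t]
          ring
      _ = _ := by
          rw [integral_mlSum_mul_sub_rpow hα hb.le hc.ne' hx]
          ring
  rw [setIntegral_congr_fun measurableSet_Ioi hinner, integral_const_mul,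
    integral_sub ((integrableOn_exp_neg_mul_mul_rpow hlam (by linarith)).div_const _) hF,
    integral_div, integral_exp_neg_mul_mul_rpow hlam (by linarith),
    integral_exp_neg_mul_mul_rpow hlam (by linarith), sub_add_cancel] at hconv
  set L := ∫ t in Ioi 0, exp (-lam * t) * mlSum α b c t
  rw [eq_div_iff (by positivity)]
  field_simp at hconv
  linarith

end MittagLeffler

open MittagLeffler

/-- For `0 < β₁ < β₂ < 1` and `c₁, c₂ > 0`, the function
`t ↦ (1/c₂) t^{β₂} E_{β₂-β₁, β₂+1}(-(c₁/c₂) t^{β₂-β₁})` has Laplace transform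
`λ ↦ 1/(c₁ λ^{β₁+1} + c₂ λ^{β₂+1})` for `λ > 0`. -/
theorem laplace_mean_inverse_subordinator (β₁ β₂ c₁ c₂ : ℝ)
    (h1 : 0 < β₁) (h12 : β₁ < β₂) (h2 : β₂ < 1)
    (hc1 : 0 < c₁) (hc2 : 0 < c₂)
    (lam : ℝ) (hlam : 0 < lam) :
    ∫ t in Ioi (0 : ℝ), Real.exp (-lam * t) *
        ((1 / c₂) * t ^ β₂ *
          (∑' j : ℕ, (-(c₁ / c₂) * t ^ (β₂ - β₁)) ^ j /
            Real.Gamma ((β₂ - β₁) * j + (β₂ + 1))))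
      = 1 / (c₁ * lam ^ (β₁ + 1) + c₂ * lam ^ (β₂ + 1)) := by
  have hintegrand : ∀ t ∈ Ioi (0 : ℝ), exp (-lam * t) * ((1 / c₂) * t ^ β₂ *
      (∑' j : ℕ, (-(c₁ / c₂) * t ^ (β₂ - β₁)) ^ j / Gamma ((β₂ - β₁) * j + (β₂ + 1)))) =
        1 / c₂ * (exp (-lam * t) * mlSum (β₂ - β₁) β₂ (c₁ / c₂) t) := fun t ht => by
    rw [mul_assoc (1 / c₂), rpow_mul_tsum_eq_mlSum ht]
    ring
  rw [setIntegral_congr_fun measurableSet_Ioi hintegrand, integral_const_mul,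
    integral_exp_neg_mul_mlSum (by linarith) (by linarith) (by linarith) (div_pos hc1 hc2) hlam,
    one_div lam, inv_rpow hlam.le, inv_rpow hlam.le,
    show β₂ + 1 = (β₂ - β₁) + (β₁ + 1) by ring, rpow_add hlam]
  field_simp
  ring
end
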